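/- Let (M,F) be a Finsler manifold, γ = x(t), 0 ≤ t ≤ a, a smooth curve from q = x(0) to p = x(a), and τ_a : 𝓘_qM → 𝓘_pM the induced nonlinear parallel translation. If ξ ∈ 𝔛^∞(𝓘_qM) is tangent to the holonomy group Hol(q), then its Berwald translate B_γξ := (τ_a)_* ∘ ξ ∘ τ_a⁻¹ ∈ 𝔛^∞(𝓘_pM) is tangent to the holonomy group Hol(p). -/

import Mathlib

/-!
Conjugation by `τ₁` maps `Hol(q)` into `Hol(p)`: running `γ` backwards, then a loop at `q`, then
`γ`, gives a loop at `p` whose parallel translation is `τ₁ ∘ φ ∘ τ₁⁻¹`, and reparametrizing the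
pieces so that the loop rests near the junctions keeps it smooth. So if `φ_t` is a `C¹` family in
`Hol(q)` with velocity `ξ`, then `τ₁ ∘ φ_t ∘ τ₁⁻¹` is one in `Hol(p)` with velocity `B_γ ξ`, as soon
as `τ₁` and `τ₁⁻¹` are `C¹`; `τ₁⁻¹` is itself the parallel translation along the reversed curve.

That time-one maps of smooth flows are `C¹` is proved with the inverse function theorem on
`C([0, 1], E)`. After cutting the vector field `G` off to compact support, the trajectory from `y`
solves `u - ∫₀ᵗ G (s, u s) ds = y`. The left side is a `C¹` map of `u` whose derivative `1 - V`
is invertible, because the Volterra operator `V` satisfies `‖Vᵏ‖ ≤ Mᵏ / k!`; hence the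
trajectory depends `C¹` on `y`.
-/

noncomputable section

abbrev Vec (n : ℕ) := Fin n → ℝ

/-- `τ s` is the nonlinear parallel translation from `c 0` to `c s` along the curve `c`,
with respect to the nonlinear connection coefficients `N = (G^i_j)`:
the translated vectors `t ↦ τ t y₀` solve `dX^i/dt + G^i_j(c(t), X(t)) ċ^j(t) = 0`. -/
def IsParallelTransport {n : ℕ} (N : Vec n → Vec n → Fin n → Fin n → ℝ)
    (c : ℝ → Vec n) (τ : ℝ → Vec n → Vec n) : Prop :=
  (∀ y0, τ 0 y0 = y0) ∧
  ∀ y0 t, HasDerivAt (fun s => τ s y0)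
    (fun i => -(∑ j, N (c t) (τ t y0) i j * deriv c t j)) t

/-- The parallel translations along smooth loops based at `p`. -/
def loopTranslations {n : ℕ} (N : Vec n → Vec n → Fin n → Fin n → ℝ)
    (p : Vec n) : Set (Function.End (Vec n)) :=
  {φ | ∃ (c : ℝ → Vec n) (τ : ℝ → Vec n → Vec n),
    ContDiff ℝ (⊤ : ℕ∞) c ∧ c 0 = p ∧ c 1 = p ∧
    IsParallelTransport N c τ ∧ φ = τ 1}

/-- The holonomy group at `p`: the group of transformations of the fibre generated by
parallel translations along (piecewise smooth) loops at `p`, realized as the closure of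
the set of loop translations under composition. -/
def holonomy {n : ℕ} (N : Vec n → Vec n → Fin n → Fin n → ℝ)
    (p : Vec n) : Submonoid (Function.End (Vec n)) :=
  Submonoid.closure (loopTranslations N p)

/-- A vector field `ξ` on the fibre over `p` is tangent to a set `S` of transformations of the
fibre if there is a `C¹` one-parameter family `{φ_t ∈ S}` with `φ₀ = Id` and
`∂φ_t/∂t|₀ = ξ`. -/
def IsTangentTo {n : ℕ} (S : Set (Function.End (Vec n))) (ξ : Vec n → Vec n) : Prop :=
  ∃ ε > (0 : ℝ), ∃ φ : ℝ → Vec n → Vec n,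
    ContDiffOn ℝ 1 (fun q : ℝ × Vec n => φ q.1 q.2) ({t | |t| < ε} ×ˢ Set.univ) ∧
    (∀ t, |t| < ε → (φ t : Function.End (Vec n)) ∈ S) ∧
    φ 0 = id ∧
    ∀ y, HasDerivAt (fun t => φ t y) (ξ y) 0


open Set Metric Filter Topology unitInterval
open scoped NNReal

section Superposition

variable {E F : Type*} [NormedAddCommGroup E] [NormedAddCommGroup F]

def superposition (G : C(ℝ × E, F)) (u : C(I, E)) : C(I, F) :=
  ⟨fun t => G (t, u t), by fun_prop⟩

@[simp]
lemma superposition_apply (G : C(ℝ × E, F)) (u : C(I, E)) (t : I) :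
    superposition G u t = G (t, u t) := rfl

lemma IccExtend_superposition {G : C(ℝ × E, F)} {u : C(I, E)} {t : ℝ} (ht : t ∈ I) :
    IccExtend zero_le_one (superposition G u) t = G (t, IccExtend zero_le_one u t) := by
  simp [IccExtend_of_mem _ _ ht]

end Superposition

lemma intervalIntegrable_IccExtend {E : Type*} [NormedAddCommGroup E] (w : C(I, E)) (a b : ℝ) :
    IntervalIntegrable (IccExtend zero_le_one w) MeasureTheory.volume a b :=
  w.continuous.Icc_extend'.intervalIntegrable a b

section IntegralEquation

variable {E : Type*} [NormedAddCommGroup E] [NormedSpace ℝ E]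

def primitiveCLM : C(I, E) →L[ℝ] C(I, E) :=
  LinearMap.mkContinuous
    { toFun := fun w => ⟨fun t => ∫ s in (0 : ℝ)..t, IccExtend zero_le_one w s,
        (intervalIntegral.continuous_primitive (intervalIntegrable_IccExtend w) 0).comp
          continuous_subtype_val⟩
      map_add' := fun v w => ContinuousMap.ext fun t =>
        intervalIntegral.integral_add (intervalIntegrable_IccExtend v 0 t)
          (intervalIntegrable_IccExtend w 0 t)
      map_smul' := fun r w => ContinuousMap.ext fun t =>
        intervalIntegral.integral_smul r _ }
    1 fun w => by
      refine (ContinuousMap.norm_le _ (by positivity)).2 fun t => ?_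
      calc ‖∫ s in (0 : ℝ)..t, IccExtend zero_le_one w s‖ ≤ ‖w‖ * |(t : ℝ) - 0| :=
            intervalIntegral.norm_integral_le_of_norm_le_const fun s _ => w.norm_coe_le_norm _
        _ ≤ 1 * ‖w‖ := by
            rw [sub_zero, abs_of_nonneg t.2.1, mul_comm]
            exact mul_le_mul_of_nonneg_right t.2.2 (norm_nonneg w)

lemma primitiveCLM_apply (w : C(I, E)) (t : I) :
    primitiveCLM w t = ∫ s in (0 : ℝ)..t, IccExtend zero_le_one w s := rfl

lemma norm_primitiveCLM_apply_le {w : C(I, E)} {C : ℝ} {k : ℕ}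
    (hw : ∀ t : I, ‖w t‖ ≤ C * (t : ℝ) ^ k) (t : I) :
    ‖primitiveCLM w t‖ ≤ C * (t : ℝ) ^ (k + 1) / (k + 1) := by
  have hbound : ∀ᵐ s, s ∈ Ioc 0 (t : ℝ) → ‖IccExtend zero_le_one w s‖ ≤ C * s ^ k :=
    .of_forall fun s hs => by
      have hsI : s ∈ I := ⟨hs.1.le, hs.2.trans t.2.2⟩
      simpa [IccExtend_of_mem _ _ hsI] using hw ⟨s, hsI⟩
  calc ‖primitiveCLM w t‖ ≤ ∫ s in (0 : ℝ)..t, C * s ^ k :=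
        intervalIntegral.norm_integral_le_of_norm_le t.2.1 hbound
          ((continuous_const.mul (continuous_pow k)).intervalIntegrable _ _)
    _ = C * (t : ℝ) ^ (k + 1) / (k + 1) := by
        simp [intervalIntegral.integral_const_mul, integral_pow, mul_div_assoc]

lemma norm_primitiveCLM_comp_pow_apply_le {D : C(I, E) →L[ℝ] C(I, E)} {M : ℝ}
    (hM : 0 ≤ M) (hD : ∀ v t, ‖D v t‖ ≤ M * ‖v t‖) (k : ℕ) (v : C(I, E)) (t : I) :
    ‖((primitiveCLM.comp D) ^ k) v t‖ ≤ M ^ k * (t : ℝ) ^ k / k.factorial * ‖v‖ := by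
  induction k generalizing t with
  | zero => simpa using v.norm_coe_le_norm t
  | succ k ih =>
    rw [pow_succ', mul_apply_eq_comp, ContinuousLinearMap.comp_apply]
    refine (norm_primitiveCLM_apply_le (C := M ^ (k + 1) / k.factorial * ‖v‖) (k := k)
      (fun s => ?_) t).trans (le_of_eq ?_)
    · calc ‖D _ s‖ ≤ M * ‖((primitiveCLM.comp D) ^ k) v s‖ := hD _ s
        _ ≤ M * (M ^ k * (s : ℝ) ^ k / k.factorial * ‖v‖) := by gcongr; exact ih s
        _ = _ := by ring
    · rw [Nat.factorial_succ]; push_cast; field_simp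

lemma isUnit_one_sub_primitiveCLM_comp [CompleteSpace E] {D : C(I, E) →L[ℝ] C(I, E)} {M : ℝ}
    (hM : 0 ≤ M) (hD : ∀ v t, ‖D v t‖ ≤ M * ‖v t‖) : IsUnit (1 - primitiveCLM.comp D) := by
  set V := primitiveCLM.comp D
  obtain ⟨m, hm⟩ : ∃ m : ℕ, M ^ m / m.factorial < 1 :=
    ((FloorSemiring.tendsto_pow_div_factorial_atTop M).eventually_lt_const one_pos).exists
  have hVm : ‖V ^ m‖ < 1 := by
    refine lt_of_le_of_lt (ContinuousLinearMap.opNorm_le_bound _ (by positivity) fun v =>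
      (ContinuousMap.norm_le _ (by positivity)).2 fun t =>
        (norm_primitiveCLM_comp_pow_apply_le hM hD m v t).trans ?_) hm
    gcongr
    calc M ^ m * (t : ℝ) ^ m ≤ M ^ m * 1 := by gcongr; exact pow_le_one₀ t.2.1 t.2.2
      _ = M ^ m := mul_one _
  have hunit : IsUnit ((1 - V) * ∑ i ∈ Finset.range m, V ^ i) := by
    rw [mul_neg_geom_sum]
    exact (Units.oneSub (R := C(I, E) →L[ℝ] C(I, E)) (V ^ m) hVm).isUnit
  have hcomm : Commute (1 - V) (∑ i ∈ Finset.range m, V ^ i) :=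
    Commute.sum_right _ _ _ fun i _ => ((Commute.one_left V).sub_left (Commute.refl V)).pow_right i
  exact (hcomm.isUnit_mul_iff.1 hunit).1

def superpositionDeriv (K : C(ℝ × E, E →L[ℝ] E)) (u : C(I, E)) : C(I, E) →L[ℝ] C(I, E) :=
  LinearMap.mkContinuous
    { toFun := fun v => ⟨fun t => K (t, u t) (v t), by fun_prop⟩
      map_add' := fun v w => ContinuousMap.ext fun t => (K (t, u t)).map_add (v t) (w t)
      map_smul' := fun r v => ContinuousMap.ext fun t => (K (t, u t)).map_smul r (v t) }
    ‖superposition K u‖ fun v => (ContinuousMap.norm_le _ (by positivity)).2 fun t =>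
      ((K (t, u t)).le_opNorm (v t)).trans <| mul_le_mul ((superposition K u).norm_coe_le_norm t)
        (v.norm_coe_le_norm t) (norm_nonneg _) (norm_nonneg _)

lemma norm_superpositionDeriv_apply_le (K : C(ℝ × E, E →L[ℝ] E)) (u v : C(I, E)) (t : I) :
    ‖superpositionDeriv K u v t‖ ≤ ‖superposition K u‖ * ‖v t‖ :=
  ((K (t, u t)).le_opNorm (v t)).trans <|
    mul_le_mul_of_nonneg_right ((superposition K u).norm_coe_le_norm t) (norm_nonneg _)

lemma norm_sub_sub_le_of_lipschitzWith {F : Type*} [NormedAddCommGroup F] [NormedSpace ℝ F]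
    {f : E → F} {f' : E → E →L[ℝ] F} {L : ℝ≥0} (hf : ∀ x, HasFDerivAt f (f' x) x)
    (hf' : LipschitzWith L f') (x d : E) : ‖f (x + d) - f x - f' x d‖ ≤ L * ‖d‖ * ‖d‖ := by
  have hbound : ∀ z ∈ closedBall x ‖d‖, ‖f' z - f' x‖ ≤ L * ‖d‖ := fun z hz => by
    rw [← dist_eq_norm]
    exact (hf'.dist_le_mul z x).trans (by gcongr; exact hz)
  simpa using (convex_closedBall x ‖d‖).norm_image_sub_le_of_norm_hasFDerivWithin_le'
    (fun z _ => (hf z).hasFDerivWithinAt) hbound (mem_closedBall_self (norm_nonneg d))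
    (by simp : x + d ∈ closedBall x ‖d‖)

variable {G : C(ℝ × E, E)} {K : C(ℝ × E, E →L[ℝ] E)} {L : ℝ≥0}

theorem hasFDerivAt_superposition (hGK : ∀ t x, HasFDerivAt (fun z => G (t, z)) (K (t, x)) x)
    (hK : ∀ t, LipschitzWith L fun x => K (t, x)) (u : C(I, E)) :
    HasFDerivAt (superposition G) (superpositionDeriv K u) u := by
  have hquad : ∀ v, ‖superposition G (u + v) - superposition G u - superpositionDeriv K u v‖
      ≤ L * ‖v‖ ^ 2 := fun v => (ContinuousMap.norm_le _ (by positivity)).2 fun t => by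
    refine (norm_sub_sub_le_of_lipschitzWith (hGK t) (hK t) (u t) (v t)).trans ?_
    have := v.norm_coe_le_norm t
    rw [sq, ← mul_assoc]
    gcongr
  rw [hasFDerivAt_iff_isLittleO_nhds_zero]
  refine (Asymptotics.IsBigO.of_bound L (.of_forall fun v => ?_)).trans_isLittleO
    (Asymptotics.isLittleO_norm_pow_id one_lt_two)
  simpa using hquad v

lemma lipschitzWith_superpositionDeriv (hK : ∀ t, LipschitzWith L fun x => K (t, x)) :
    LipschitzWith L (superpositionDeriv K) := by
  refine LipschitzWith.of_dist_le_mul fun u u' => ?_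
  rw [dist_eq_norm, dist_eq_norm]
  refine ContinuousLinearMap.opNorm_le_bound _ (by positivity) fun v =>
    (ContinuousMap.norm_le _ (by positivity)).2 fun t => ?_
  refine ((K (t, u t) - K (t, u' t)).le_opNorm (v t)).trans ?_
  calc ‖K (t, u t) - K (t, u' t)‖ * ‖v t‖ ≤ L * ‖u - u'‖ * ‖v‖ := by
        rw [← dist_eq_norm]
        gcongr
        · exact (hK t).dist_le_mul _ _ |>.trans (by
            gcongr; rw [dist_eq_norm]; exact (u - u').norm_coe_le_norm t)
        · exact v.norm_coe_le_norm t

theorem contDiff_superposition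
    (hGK : ∀ t x, HasFDerivAt (fun z => G (t, z)) (K (t, x)) x)
    (hK : ∀ t, LipschitzWith L fun x => K (t, x)) : ContDiff ℝ 1 (superposition G) := by
  have hderiv := hasFDerivAt_superposition hGK hK
  rw [contDiff_one_iff_fderiv, funext fun u => (hderiv u).fderiv]
  exact ⟨fun u => (hderiv u).differentiableAt, (lipschitzWith_superpositionDeriv hK).continuous⟩

/-- `picardResidual G u = const y` is the integral form `u t = y + ∫₀ᵗ G (s, u s) ds` of the
initial value problem `u' = G (t, u)`, `u 0 = y`. -/
def picardResidual (G : C(ℝ × E, E)) (u : C(I, E)) : C(I, E) :=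
  u - primitiveCLM (superposition G u)

theorem hasFDerivAt_picardResidual
    (hGK : ∀ t x, HasFDerivAt (fun z => G (t, z)) (K (t, x)) x)
    (hK : ∀ t, LipschitzWith L fun x => K (t, x)) (u : C(I, E)) :
    HasFDerivAt (picardResidual G) (1 - primitiveCLM.comp (superpositionDeriv K u)) u :=
  (hasFDerivAt_id u).sub <|
    (primitiveCLM (E := E)).hasFDerivAt.comp u (hasFDerivAt_superposition hGK hK u)

theorem exists_contDiffAt_rightInverse_picardResidual [CompleteSpace E]
    (hGK : ∀ t x, HasFDerivAt (fun z => G (t, z)) (K (t, x)) x)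
    (hK : ∀ t, LipschitzWith L fun x => K (t, x)) (u₀ : C(I, E)) :
    ∃ Ψ : C(I, E) → C(I, E), ContDiffAt ℝ 1 Ψ (picardResidual G u₀) ∧
      Ψ (picardResidual G u₀) = u₀ ∧
      ∀ᶠ v in 𝓝 (picardResidual G u₀), picardResidual G (Ψ v) = v := by
  obtain ⟨W, hW⟩ := isUnit_one_sub_primitiveCLM_comp (norm_nonneg (superposition K u₀))
    (norm_superpositionDeriv_apply_le K u₀)
  have hderiv : HasFDerivAt (picardResidual G)
      (ContinuousLinearEquiv.unitsEquiv ℝ _ W : C(I, E) →L[ℝ] C(I, E)) u₀ := by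
    convert hasFDerivAt_picardResidual hGK hK u₀
    exact ContinuousLinearMap.ext fun v => by simp [hW]
  have hC : ContDiffAt ℝ 1 (picardResidual G) u₀ :=
    (contDiff_id.sub <|
      (primitiveCLM (E := E)).contDiff.comp (contDiff_superposition hGK hK)).contDiffAt
  exact ⟨_, hC.to_localInverse hderiv one_ne_zero, hC.localInverse_apply_image hderiv one_ne_zero,
    (hC.hasStrictFDerivAt' hderiv one_ne_zero).eventually_right_inverse⟩

theorem picardResidual_eq_const_iff [CompleteSpace E] {G : C(ℝ × E, E)} {u : C(I, E)} {y : E} :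
    picardResidual G u = ContinuousMap.const I y ↔ u 0 = y ∧ ∀ t ∈ I,
      HasDerivWithinAt (IccExtend zero_le_one u) (G (t, IccExtend zero_le_one u t)) I t := by
  set g := IccExtend zero_le_one (superposition G u)
  have hg : Continuous g := (superposition G u).continuous.Icc_extend'
  constructor
  · intro h
    have hu : ∀ r ∈ I, IccExtend zero_le_one u r = y + ∫ s in (0 : ℝ)..r, g s := fun r hr => by
      have := congrArg (· ⟨r, hr⟩) h
      simp only [picardResidual, ContinuousMap.sub_apply, ContinuousMap.const_apply] at this
      rw [IccExtend_of_mem _ _ hr, ← this, primitiveCLM_apply, sub_add_cancel]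
    refine ⟨by simpa using hu 0 unitInterval.zero_mem, fun t ht => ?_⟩
    have hprim : HasDerivAt (fun r => y + ∫ s in (0 : ℝ)..r, g s) (g t) t :=
      (intervalIntegral.integral_hasDerivAt_right (hg.intervalIntegrable 0 t)
        (hg.stronglyMeasurableAtFilter _ _) hg.continuousAt).const_add y
    rw [← IccExtend_superposition ht]
    exact hprim.hasDerivWithinAt.congr hu (hu t ht)
  · rintro ⟨h0, hderiv⟩
    ext t
    have hftc : ∫ s in (0 : ℝ)..t, g s = IccExtend zero_le_one u t - IccExtend zero_le_one u 0 := by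
      refine intervalIntegral.integral_eq_sub_of_hasDeriv_right_of_le t.2.1
        u.continuous.Icc_extend'.continuousOn (fun x hx => ?_) (hg.intervalIntegrable 0 t)
      have hxI : x ∈ I := ⟨hx.1.le, hx.2.le.trans t.2.2⟩
      rw [show g x = _ from IccExtend_superposition hxI]
      exact ((hderiv x hxI).hasDerivAt (Icc_mem_nhds hx.1 (hx.2.trans_le t.2.2))).hasDerivWithinAt
    simp only [picardResidual, ContinuousMap.sub_apply, ContinuousMap.const_apply,
      primitiveCLM_apply]
    rw [hftc, IccExtend_val, IccExtend_left, ← h0]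
    simp

lemma picardResidual_eq_const_of_hasDerivAt [CompleteSpace E] {G : C(ℝ × E, E)} {u : C(I, E)}
    {γ : ℝ → E} (hu : ∀ t : I, u t = γ t) (hγ : ∀ t ∈ I, HasDerivAt γ (G (t, γ t)) t) :
    picardResidual G u = ContinuousMap.const I (γ 0) := by
  have hū : EqOn (IccExtend zero_le_one u) γ I := fun s hs => (IccExtend_of_mem _ _ hs).trans (hu _)
  refine picardResidual_eq_const_iff.2 ⟨by simpa using hu 0, fun t ht => ?_⟩
  rw [hū ht]
  exact (hγ t ht).hasDerivWithinAt.congr hū (hū ht)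

end IntegralEquation

section Flow

variable {E : Type*} [NormedAddCommGroup E] [NormedSpace ℝ E]

lemma contDiff_continuousMap_const {X : Type*} [TopologicalSpace X] [CompactSpace X]
    {n : WithTop ℕ∞} : ContDiff ℝ n fun y : E => ContinuousMap.const X y :=
  (IsLinearMap.with_bound ⟨fun _ _ => rfl, fun _ _ => rfl⟩ 1 fun y =>
    (ContinuousMap.norm_le _ (by positivity)).2 fun _ => (one_mul ‖y‖).symm.le).contDiff

theorem exists_contDiff_hasCompactSupport_eqOn_closedBall {X Y : Type*} [NormedAddCommGroup X]
    [NormedSpace ℝ X] [FiniteDimensional ℝ X] [NormedAddCommGroup Y] [NormedSpace ℝ Y]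
    {f : X → Y} {n : ℕ∞} (hf : ContDiff ℝ n f) (r : ℝ) :
    ∃ g : X → Y, ContDiff ℝ n g ∧ HasCompactSupport g ∧ EqOn g f (closedBall 0 r) := by
  let χ : ContDiffBump (0 : X) := ⟨max r 0 + 1, max r 0 + 2, by positivity, by linarith⟩
  refine ⟨fun x => χ x • f x, χ.contDiff.smul hf, χ.hasCompactSupport.smul_right, fun x hx => ?_⟩
  have hχ : χ x = 1 :=
    χ.one_of_mem_closedBall <|
      closedBall_subset_closedBall (by simp only [χ]; linarith [le_max_left r 0]) hx
  simp [hχ]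

theorem exists_lipschitzWith_fderiv_snd {F : Type*} [NormedAddCommGroup F] [NormedSpace ℝ F]
    {G : ℝ × E → F} (hG : ContDiff ℝ 2 G) (hGc : HasCompactSupport G) :
    ∃ (K : C(ℝ × E, E →L[ℝ] F)) (L : ℝ≥0),
      (∀ t x, HasFDerivAt (fun z => G (t, z)) (K (t, x)) x) ∧
      ∀ t, LipschitzWith L fun x => K (t, x) := by
  obtain ⟨C, hC⟩ := (hG.fderiv_right (m := 1) (by norm_num)).lipschitzWith_of_hasCompactSupport
    (hGc.fderiv ℝ) one_ne_zero
  let restrict := (ContinuousLinearMap.compL ℝ E (ℝ × E) F).flip (.inr ℝ ℝ E)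
  have hK : LipschitzWith (‖restrict‖₊ * C) fun p => restrict (fderiv ℝ G p) :=
    restrict.lipschitz.comp hC
  refine ⟨⟨_, hK.continuous⟩, ‖restrict‖₊ * C, fun t x => ?_, fun t => ?_⟩
  · exact ((hG.differentiable (by norm_num) (t, x)).hasFDerivAt.comp x
      (hasFDerivAt_prodMk_right t x))
  · simpa [Function.comp_def] using hK.comp (LipschitzWith.prodMk_left t)

theorem eqOn_Icc_of_hasDerivWithinAt_of_locallyLipschitz {F : ℝ → E → E}
    (hF : LocallyLipschitz fun p : ℝ × E => F p.1 p.2) {f g : ℝ → E} {a b : ℝ}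
    (hf : ContinuousOn f (Icc a b)) (hf' : ∀ t ∈ Ico a b, HasDerivWithinAt f (F t (f t)) (Ici t) t)
    (hg : ContinuousOn g (Icc a b)) (hg' : ∀ t ∈ Ico a b, HasDerivWithinAt g (F t (g t)) (Ici t) t)
    (ha : f a = g a) : EqOn f g (Icc a b) := by
  set S := f '' Icc a b ∪ g '' Icc a b
  have hS : IsCompact S :=
    (isCompact_Icc.image_of_continuousOn hf).union (isCompact_Icc.image_of_continuousOn hg)
  obtain ⟨K, hK⟩ := hF.locallyLipschitzOn.exists_lipschitzOnWith_of_compact (isCompact_Icc.prod hS)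
  have hKt : ∀ t ∈ Ico a b, LipschitzOnWith (K * 1) (F t) S := fun t ht =>
    hK.comp (LipschitzWith.prodMk_left t).lipschitzOnWith fun x hx => ⟨Ico_subset_Icc_self ht, hx⟩
  exact ODE_solution_unique_of_mem_Icc_right hKt hf hf'
    (fun t ht => .inl ⟨t, Ico_subset_Icc_self ht, rfl⟩) hg hg'
    (fun t ht => .inr ⟨t, Ico_subset_Icc_self ht, rfl⟩) ha


variable [CompleteSpace E] {F : ℝ → E → E} {τ : ℝ → E → E}

theorem flow_eq_of_picardResidual_eq_const (hF : LocallyLipschitz fun p : ℝ × E => F p.1 p.2)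
    (hτ : ∀ y t, HasDerivAt (fun s => τ s y) (F t (τ t y)) t) (h0 : ∀ y, τ 0 y = y)
    {G : C(ℝ × E, E)} {r : ℝ} (hGF : ∀ t ∈ I, ∀ x ∈ closedBall (0 : E) r, G (t, x) = F t x)
    {u : C(I, E)} (hu : ∀ t, u t ∈ closedBall (0 : E) r) {y : E}
    (hres : picardResidual G u = ContinuousMap.const I y) (t : I) : τ t y = u t := by
  obtain ⟨hu0, hderiv⟩ := picardResidual_eq_const_iff.1 hres
  have hū : ∀ s ∈ I, IccExtend zero_le_one u s ∈ closedBall (0 : E) r := fun s hs => by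
    rw [IccExtend_of_mem _ _ hs]; exact hu _
  have heq := eqOn_Icc_of_hasDerivWithinAt_of_locallyLipschitz hF
    (fun s _ => (hτ y s).continuousAt.continuousWithinAt)
    (fun s _ => (hτ y s).hasDerivWithinAt) u.continuous.Icc_extend'.continuousOn
    (fun s hs => by
      have hsI : s ∈ I := Ico_subset_Icc_self hs
      rw [← hGF s hsI _ (hū s hsI)]
      exact (hderiv s hsI).mono_of_mem_nhdsWithin (Icc_mem_nhdsGE_of_mem hs))
    (by rw [h0, IccExtend_left]; exact hu0.symm) t.2
  rwa [IccExtend_val] at heq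

theorem contDiff_one_of_hasDerivAt_flow [FiniteDimensional ℝ E]
    (hF : ContDiff ℝ 2 fun p : ℝ × E => F p.1 p.2)
    (hτ : ∀ y t, HasDerivAt (fun s => τ s y) (F t (τ t y)) t) (h0 : ∀ y, τ 0 y = y) :
    ContDiff ℝ 1 (τ 1) := by
  refine contDiff_iff_contDiffAt.2 fun y₀ => ?_
  let u₀ : C(I, E) := ⟨fun t => τ t y₀,
    (continuous_iff_continuousAt.2 fun t => (hτ y₀ t).continuousAt).comp continuous_subtype_val⟩
  set r := ‖u₀‖ + 1
  obtain ⟨G, hG, hGc, hGF⟩ := exists_contDiff_hasCompactSupport_eqOn_closedBall hF r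
  obtain ⟨K, L, hGK, hK⟩ := exists_lipschitzWith_fderiv_snd hG hGc
  let Gc : C(ℝ × E, E) := ⟨G, hG.continuous⟩
  have hGcF : ∀ t ∈ I, ∀ x ∈ closedBall (0 : E) r, Gc (t, x) = F t x := fun t ht x hx =>
    hGF <| by
      rw [mem_closedBall_zero_iff, Prod.norm_def, max_le_iff, Real.norm_of_nonneg ht.1]
      exact ⟨ht.2.trans (by simp [r]), mem_closedBall_zero_iff.1 hx⟩
  have hu₀ : picardResidual Gc u₀ = ContinuousMap.const I y₀ := by
    rw [← h0 y₀]
    refine picardResidual_eq_const_of_hasDerivAt (γ := fun s => τ s y₀) (fun _ => rfl)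
      fun t ht => ?_
    rw [hGcF t ht (τ t y₀)
      (mem_closedBall_zero_iff.2 ((u₀.norm_coe_le_norm ⟨t, ht⟩).trans (by simp [r])))]
    exact hτ y₀ t
  obtain ⟨Ψ, hΨ, hΨu₀, hΨinv⟩ := exists_contDiffAt_rightInverse_picardResidual (G := Gc) hGK hK u₀
  rw [hu₀] at hΨ hΨu₀ hΨinv
  have hconst : ContDiff ℝ 1 fun y : E => ContinuousMap.const I y := contDiff_continuousMap_const
  have hsol : ContDiffAt ℝ 1 (fun y => Ψ (ContinuousMap.const I y)) y₀ :=
    hΨ.comp y₀ hconst.contDiffAt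
  have hnear : ∀ᶠ y in 𝓝 y₀, τ 1 y = Ψ (ContinuousMap.const I y) 1 := by
    have hball : ∀ᶠ y in 𝓝 y₀, Ψ (ContinuousMap.const I y) ∈ ball u₀ 1 :=
      hsol.continuousAt.eventually_mem (by rw [hΨu₀]; exact ball_mem_nhds u₀ one_pos)
    filter_upwards [hball, hconst.continuous.continuousAt.eventually hΨinv] with y hy hres
    refine flow_eq_of_picardResidual_eq_const (hF.of_le one_le_two).locallyLipschitz hτ h0 hGcF
      (fun t => ?_) hres 1
    rw [mem_ball, dist_eq_norm] at hy
    rw [mem_closedBall_zero_iff]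
    calc ‖Ψ (ContinuousMap.const I y) t‖ ≤ ‖u₀ t‖ + ‖(Ψ (ContinuousMap.const I y) - u₀) t‖ :=
          norm_le_insert' _ _
      _ ≤ r := add_le_add (u₀.norm_coe_le_norm t) (((Ψ _ - u₀).norm_coe_le_norm t).trans hy.le)
  have heval : ContDiffAt ℝ 1 (fun y => Ψ (ContinuousMap.const I y) 1) y₀ :=
    ((ContinuousMap.evalCLM (M := E) ℝ (1 : I)).contDiff.contDiffAt.comp y₀ hsol :)
  exact heval.congr_of_eventuallyEq hnear

end Flow

section ParallelTransport

variable {n : ℕ} {N : Vec n → Vec n → Fin n → Fin n → ℝ} {c : ℝ → Vec n} {τ : ℝ → Vec n → Vec n}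

def transportField (N : Vec n → Vec n → Fin n → Fin n → ℝ) (c : ℝ → Vec n) (t : ℝ) (x : Vec n) :
    Vec n :=
  fun i => -(∑ j, N (c t) x i j * deriv c t j)

theorem contDiff_transportField
    (hN : ContDiff ℝ (⊤ : ℕ∞) fun q : Vec n × Vec n => (fun i j => N q.1 q.2 i j :
      Fin n → Fin n → ℝ))
    (hc : ContDiff ℝ (⊤ : ℕ∞) c) :
    ContDiff ℝ (⊤ : ℕ∞) fun p : ℝ × Vec n => transportField N c p.1 p.2 := by
  have hc' : ContDiff ℝ (⊤ : ℕ∞) (deriv c) := (contDiff_infty_iff_deriv.mp hc).2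
  refine contDiff_pi.2 fun i => ContDiff.neg <| ContDiff.sum fun j _ => ContDiff.mul ?_ ?_
  · exact (contDiff_pi.1 (contDiff_pi.1 hN i) j).comp ((hc.comp contDiff_fst).prodMk contDiff_snd)
  · exact (contDiff_pi.1 hc' j).comp contDiff_fst

theorem IsParallelTransport.contDiff_one
    (hN : ContDiff ℝ (⊤ : ℕ∞) fun q : Vec n × Vec n => (fun i j => N q.1 q.2 i j :
      Fin n → Fin n → ℝ))
    (hc : ContDiff ℝ (⊤ : ℕ∞) c) (hτ : IsParallelTransport N c τ) : ContDiff ℝ 1 (τ 1) :=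
  contDiff_one_of_hasDerivAt_flow
    ((contDiff_transportField hN hc).of_le (WithTop.coe_le_coe.2 le_top))
    hτ.2 hτ.1

theorem IsParallelTransport.hasDerivAt_of_eventuallyEq (hτ : IsParallelTransport N c τ)
    {g : ℝ → ℝ} {t : ℝ} (hc : DifferentiableAt ℝ c (g t)) (hg : DifferentiableAt ℝ g t)
    {Γ ρ : ℝ → Vec n} {z : Vec n} (hΓ : Γ =ᶠ[𝓝 t] c ∘ g) (hρ : ρ =ᶠ[𝓝 t] fun s => τ (g s) z) :
    HasDerivAt ρ (transportField N Γ t (ρ t)) t := by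
  have hρ' := ((hτ.2 z (g t)).scomp t hg.hasDerivAt).congr_of_eventuallyEq hρ
  have hΓ' : deriv Γ t = deriv g t • deriv c (g t) := by
    rw [hΓ.deriv_eq]; exact (hc.hasDerivAt.scomp t hg.hasDerivAt).deriv
  refine hρ'.congr_deriv (funext fun i => ?_)
  simp [transportField, hΓ.self_of_nhds, hρ.self_of_nhds, hΓ', Finset.mul_sum, mul_left_comm]

theorem IsParallelTransport.reverse (hc : Differentiable ℝ c) (hτ : IsParallelTransport N c τ)
    {τinv : Vec n → Vec n} (hτinv : Function.RightInverse τinv (τ 1)) :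
    IsParallelTransport N (fun s => c (1 - s)) fun s y => τ (1 - s) (τinv y) :=
  ⟨fun y => by simpa using hτinv y, fun y t =>
    hτ.hasDerivAt_of_eventuallyEq (g := fun s => 1 - s) (hc _) (by fun_prop) .rfl .rfl⟩

lemma ite_eventuallyEq_left {α : Type*} {f₁ f₂ : ℝ → α} {b t : ℝ} (ht : t < b) :
    (fun s => if s < b then f₁ s else f₂ s) =ᶠ[𝓝 t] f₁ :=
  eventually_of_mem (Iio_mem_nhds ht) fun _ hs => if_pos hs

lemma ite_eventuallyEq_right {α : Type*} {f₁ f₂ : ℝ → α} {a b t : ℝ} (h : EqOn f₁ f₂ (Ioo a b))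
    (ht : a < t) : (fun s => if s < b then f₁ s else f₂ s) =ᶠ[𝓝 t] f₂ :=
  eventually_of_mem (Ioi_mem_nhds ht) fun s hs => by
    by_cases hsb : s < b
    · simpa [hsb] using h ⟨hs, hsb⟩
    · simp [hsb]

/-- Concatenation: the first curve is run during `[0, 1/4]`, the second during `[3/4, 1]`, and
the concatenated curve rests at the junction in between, which makes the gluing smooth. -/
theorem IsParallelTransport.trans {c₁ c₂ : ℝ → Vec n} {τ₁ τ₂ : ℝ → Vec n → Vec n}
    (hc₁ : ContDiff ℝ (⊤ : ℕ∞) c₁) (hc₂ : ContDiff ℝ (⊤ : ℕ∞) c₂) (h : c₁ 1 = c₂ 0)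
    (hτ₁ : IsParallelTransport N c₁ τ₁) (hτ₂ : IsParallelTransport N c₂ τ₂) :
    ∃ c τ, ContDiff ℝ (⊤ : ℕ∞) c ∧ c 0 = c₁ 0 ∧ c 1 = c₂ 1 ∧ IsParallelTransport N c τ ∧
      τ 1 = τ₂ 1 ∘ τ₁ 1 := by
  let g₁ : ℝ → ℝ := fun s => Real.smoothTransition (4 * s)
  let g₂ : ℝ → ℝ := fun s => Real.smoothTransition (4 * s - 3)
  have hg₁ : ContDiff ℝ (⊤ : ℕ∞) g₁ := Real.smoothTransition.contDiff.comp (by fun_prop)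
  have hg₂ : ContDiff ℝ (⊤ : ℕ∞) g₂ := Real.smoothTransition.contDiff.comp (by fun_prop)
  have hrest : ∀ s ∈ Ioo (1 / 4 : ℝ) (1 / 2), g₁ s = 1 ∧ g₂ s = 0 := fun s hs =>
    ⟨Real.smoothTransition.one_of_one_le (by linarith [hs.1]),
      Real.smoothTransition.zero_of_nonpos (by linarith [hs.2])⟩
  let Γ : ℝ → Vec n := fun s => if s < 1 / 2 then c₁ (g₁ s) else c₂ (g₂ s)
  let ρ : ℝ → Vec n → Vec n := fun s y =>
    if s < 1 / 2 then τ₁ (g₁ s) y else τ₂ (g₂ s) (τ₁ 1 y)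
  have hΓ₂ : EqOn (c₁ ∘ g₁) (c₂ ∘ g₂) (Ioo (1 / 4) (1 / 2)) := fun s hs => by
    simp [(hrest s hs).1, (hrest s hs).2, h]
  have hρ₂ (y : Vec n) : EqOn (fun s => τ₁ (g₁ s) y) (fun s => τ₂ (g₂ s) (τ₁ 1 y))
      (Ioo (1 / 4) (1 / 2)) := fun s hs => by
    simp [(hrest s hs).1, (hrest s hs).2, hτ₂.1]
  have hg₁0 : g₁ 0 = 0 := by simp [g₁, Real.smoothTransition.zero]
  have hg₂1 : g₂ 1 = 1 := by norm_num [g₂, Real.smoothTransition.one]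
  refine ⟨Γ, ρ, contDiff_iff_contDiffAt.2 fun t => ?_, by simp [Γ, hg₁0], by norm_num [Γ, hg₂1],
    ⟨fun y => by simp [ρ, hg₁0, hτ₁.1], fun y t => ?_⟩, funext fun y => by norm_num [ρ, hg₂1]⟩
  · rcases lt_or_ge t (1 / 2) with ht | ht
    · exact (hc₁.comp hg₁).contDiffAt.congr_of_eventuallyEq (ite_eventuallyEq_left ht)
    · exact (hc₂.comp hg₂).contDiffAt.congr_of_eventuallyEq
        (ite_eventuallyEq_right hΓ₂ (by linarith))
  · rcases lt_or_ge t (1 / 2) with ht | ht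
    · exact hτ₁.hasDerivAt_of_eventuallyEq (hc₁.differentiable (by simp) _)
        (hg₁.differentiable (by simp) _) (ite_eventuallyEq_left ht) (ite_eventuallyEq_left ht)
    · exact hτ₂.hasDerivAt_of_eventuallyEq (hc₂.differentiable (by simp) _)
        (hg₂.differentiable (by simp) _) (ite_eventuallyEq_right hΓ₂ (by linarith))
        (ite_eventuallyEq_right (hρ₂ y) (by linarith))

theorem conj_mem_loopTranslations (hc : ContDiff ℝ (⊤ : ℕ∞) c) (hτ : IsParallelTransport N c τ)
    {τinv : Vec n → Vec n} (hτinv : Function.RightInverse τinv (τ 1)) {φ : Function.End (Vec n)}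
    (hφ : φ ∈ loopTranslations N (c 0)) :
    (τ 1 ∘ φ ∘ τinv : Function.End (Vec n)) ∈ loopTranslations N (c 1) := by
  obtain ⟨c', τ', hc', hc'0, hc'1, hτ', rfl⟩ := hφ
  have hrev : ContDiff ℝ (⊤ : ℕ∞) fun s => c (1 - s) := hc.comp (by fun_prop)
  obtain ⟨c₃, τ₃, hc₃, hc₃0, hc₃1, hτ₃, hτ₃1⟩ :=
    (hτ.reverse (hc.differentiable (by simp)) hτinv).trans hrev hc' (by simp [hc'0]) hτ'
  obtain ⟨c₄, τ₄, hc₄, hc₄0, hc₄1, hτ₄, hτ₄1⟩ := hτ₃.trans hc₃ hc (by rw [hc₃1, hc'1]) hτ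
  refine ⟨c₄, τ₄, hc₄, by simp [hc₄0, hc₃0], hc₄1, hτ₄, ?_⟩
  rw [hτ₄1, hτ₃1]
  funext y
  simp [hτ.1]

theorem conj_mem_holonomy (hc : ContDiff ℝ (⊤ : ℕ∞) c) (hτ : IsParallelTransport N c τ)
    {τinv : Vec n → Vec n} (hleft : Function.LeftInverse τinv (τ 1))
    (hright : Function.RightInverse τinv (τ 1)) {f : Function.End (Vec n)}
    (hf : f ∈ holonomy N (c 0)) :
    (τ 1 ∘ f ∘ τinv : Function.End (Vec n)) ∈ holonomy N (c 1) := by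
  induction hf using Submonoid.closure_induction with
  | mem f hf => exact Submonoid.subset_closure (conj_mem_loopTranslations hc hτ hright hf)
  | one =>
    have h1 : (τ 1 ∘ (1 : Function.End (Vec n)) ∘ τinv : Function.End (Vec n)) =
        (1 : Function.End (Vec n)) := funext hright
    rw [h1]
    exact one_mem _
  | mul f g _ _ hf hg =>
    have hfg : (τ 1 ∘ (f * g) ∘ τinv : Function.End (Vec n)) =
        (show Function.End (Vec n) from τ 1 ∘ f ∘ τinv) *
          (show Function.End (Vec n) from τ 1 ∘ g ∘ τinv) :=
      funext fun y => congrArg (fun x => τ 1 (f x)) (hleft (g (τinv y))).symm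
    rw [hfg]
    exact mul_mem hf hg

end ParallelTransport

theorem IsTangentTo.conj {n : ℕ} {S T : Set (Function.End (Vec n))} {ξ : Vec n → Vec n}
    (hξ : IsTangentTo S ξ) {A B : Vec n → Vec n} (hA : ContDiff ℝ 1 A) (hB : ContDiff ℝ 1 B)
    (hAB : Function.RightInverse B A) (hST : ∀ f ∈ S, (A ∘ f ∘ B : Function.End (Vec n)) ∈ T) :
    IsTangentTo T fun y => fderiv ℝ A (B y) (ξ (B y)) := by
  obtain ⟨ε, hε, φ, hφ, hφS, hφ0, hφξ⟩ := hξ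
  refine ⟨ε, hε, fun t => A ∘ φ t ∘ B, ?_, fun t ht => hST _ (hφS t ht), ?_, fun y => ?_⟩
  · exact hA.comp_contDiffOn (hφ.comp (contDiff_fst.prodMk (hB.comp contDiff_snd)).contDiffOn
      fun q hq => ⟨hq.1, trivial⟩)
  · funext y; simp [hφ0, hAB y]
  · have hAd : HasFDerivAt A (fderiv ℝ A (B y)) (φ 0 (B y)) := by
      rw [hφ0]; exact (hA.differentiable one_ne_zero _).hasFDerivAt
    exact hAd.comp_hasDerivAt 0 (hφξ (B y))

/-- Lemma on conjugation by parallel translation: if `ξ` is a vector field on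
the indicatrix at `q = c 0` tangent to the holonomy group `Hol(q)`, then its Berwald
translate `B_γ ξ = (τ₁)_* ∘ ξ ∘ τ₁⁻¹` along the curve `γ = c` to `p = c 1` is tangent to the
holonomy group `Hol(p)`. -/
theorem berwald_translate_tangent {n : ℕ}
    (N : Vec n → Vec n → Fin n → Fin n → ℝ)
    (hN : ContDiff ℝ (⊤ : ℕ∞) (fun q : Vec n × Vec n => (fun i j => N q.1 q.2 i j :
      Fin n → Fin n → ℝ)))
    (c : ℝ → Vec n) (hc : ContDiff ℝ (⊤ : ℕ∞) c)
    (τ : ℝ → Vec n → Vec n) (hτ : IsParallelTransport N c τ)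
    (τinv : Vec n → Vec n)
    (hτinv : ∀ y, τinv (τ 1 y) = y ∧ τ 1 (τinv y) = y)
    (ξ : Vec n → Vec n)
    (hξ : IsTangentTo (holonomy N (c 0) : Set (Function.End (Vec n))) ξ) :
    IsTangentTo (holonomy N (c 1) : Set (Function.End (Vec n)))
      (fun y => fderiv ℝ (τ 1) (τinv y) (ξ (τinv y))) := by
  have hleft : Function.LeftInverse τinv (τ 1) := fun y => (hτinv y).1
  have hright : Function.RightInverse τinv (τ 1) := fun y => (hτinv y).2
  have hτinv₁ : ContDiff ℝ 1 τinv := by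
    simpa [hτ.1] using (hτ.reverse (hc.differentiable (by simp)) hright).contDiff_one hN
      (hc.comp (by fun_prop))
  exact hξ.conj (hτ.contDiff_one hN hc) hτinv₁ hright fun f hf =>
    conj_mem_holonomy hc hτ hleft hright hf
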